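/- A complete set of representatives for the double coset space Γ_{2,0} \ Sp(2,ℤ) / l_{1,1}(SL₂(ℤ) × SL₂(ℤ)) is given by {U₂(0₂)} ∪ {U₂([[0,d],[d,0]]) : d ∈ ℕ, d ≥ 1}, where U₂(a) = [[1₂,0],[a,1₂]]. -/

import Mathlib

open Matrix

noncomputable def stmt15J : Matrix (Fin 4) (Fin 4) ℤ :=
  !![0, 0, 1, 0; 0, 0, 0, 1; -1, 0, 0, 0; 0, -1, 0, 0]

/-- `Sp(2,ℤ)` as a set of `4 × 4` integer matrices. -/
def stmt15Sp2 : Set (Matrix (Fin 4) (Fin 4) ℤ) :=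
  {g | gᵀ * stmt15J * g = stmt15J}

/-- The Siegel parabolic `Γ_{2,0} = {[[a,b],[c,d]] ∈ Sp(2,ℤ) : c = 0}`. -/
def stmt15Gamma20 : Set (Matrix (Fin 4) (Fin 4) ℤ) :=
  {g | g ∈ stmt15Sp2 ∧ g 2 0 = 0 ∧ g 2 1 = 0 ∧ g 3 0 = 0 ∧ g 3 1 = 0}

/-- `U₂(a) = [[1₂,0],[a,1₂]]`. -/
noncomputable def stmt15U2 (a : Matrix (Fin 2) (Fin 2) ℤ) : Matrix (Fin 4) (Fin 4) ℤ :=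
  !![1, 0, 0, 0; 0, 1, 0, 0; a 0 0, a 0 1, 1, 0; a 1 0, a 1 1, 0, 1]

/-- The block-diagonal embedding `l_{1,1} : SL₂(ℤ) × SL₂(ℤ) → Sp(2,ℤ)`. -/
noncomputable def stmt15embed (γ δ : Matrix.SpecialLinearGroup (Fin 2) ℤ) :
    Matrix (Fin 4) (Fin 4) ℤ :=
  !![γ 0 0, 0, γ 0 1, 0; 0, δ 0 0, 0, δ 0 1; γ 1 0, 0, γ 1 1, 0; 0, δ 1 0, 0, δ 1 1]

/-- The representatives: `rep 0 = U₂(0₂)` and `rep d = U₂([[0,d],[d,0]])` for `d ≥ 1`. -/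
noncomputable def stmt15rep (d : ℕ) : Matrix (Fin 4) (Fin 4) ℤ :=
  stmt15U2 !![0, (d : ℤ); (d : ℤ), 0]

/-!
The lower half `(C D)` of `g ∈ Sp(2,ℤ)` determines the coset `Γ_{2,0} g`, and right
multiplication by `l_{1,1}(γ, δ)` acts on its columns `0, 2` by `γ` and on its columns `1, 3`
by `δ`. Call these two `2 × 2` blocks `P` and `Q`. Then `g ∈ Γ_{2,0} U₂([[0,d],[d,0]])` exactly
when `P = W [[0,1],[d,0]]` and `Q = W [[d,0],[0,1]]` for some `W`.

Existence: the Smith normal form brings `P` to `diag(a, b)` with `a ∣ b`; since the rows of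
`(C D)` span a primitive isotropic lattice, `a = ±1`, after which a Bezout step on `Q` and one
transvection reach the normal form. Uniqueness: `|det P|` is invariant under both actions and
equals `d` on the representative.
-/

open scoped MatrixGroups

local notation "M₂" => Matrix (Fin 2) (Fin 2) ℤ
local notation "M₄" => Matrix (Fin 4) (Fin 4) ℤ

namespace Matrix.SpecialLinearGroup

@[simp]
lemma coe_transvection_zero_one (b : ℤ) :
    (transvection (zero_ne_one : (0 : Fin 2) ≠ 1) b : M₂) = !![1, b; 0, 1] := by
  ext i j; fin_cases i <;> fin_cases j <;> simp [transvection_coe]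

@[simp]
lemma coe_transvection_one_zero (b : ℤ) :
    (transvection (one_ne_zero : (1 : Fin 2) ≠ 0) b : M₂) = !![1, 0; b, 1] := by
  ext i j; fin_cases i <;> fin_cases j <;> simp [transvection_coe]

lemma coe_mul_coe_inv (γ : SL(2, ℤ)) : (γ : M₂) * (↑γ⁻¹ : M₂) = 1 := by
  simp only [← coe_mul, mul_inv_cancel]; rfl

lemma coe_inv_mul_coe (γ : SL(2, ℤ)) : (↑γ⁻¹ : M₂) * (γ : M₂) = 1 := by
  simp only [← coe_mul, inv_mul_cancel]; rfl

end Matrix.SpecialLinearGroup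

open Matrix.SpecialLinearGroup

local notation "upperT" => Matrix.SpecialLinearGroup.transvection (zero_ne_one : (0 : Fin 2) ≠ 1)
local notation "lowerT" => Matrix.SpecialLinearGroup.transvection (one_ne_zero : (1 : Fin 2) ≠ 0)

/-! ### `SL(2, ℤ)` acting on `2 × 2` integer matrices -/

def HasSmithForm (P : M₂) : Prop :=
  ∃ (L γ : SL(2, ℤ)) (a b : ℤ), a ∣ b ∧ (L : M₂) * P * (γ : M₂) = !![a, 0; 0, b]

namespace HasSmithForm

variable {P : M₂}

theorem of_mul_mul (L γ : SL(2, ℤ)) (h : HasSmithForm ((L : M₂) * P * (γ : M₂))) :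
    HasSmithForm P := by
  obtain ⟨L', γ', a, b, hab, h⟩ := h
  refine ⟨L' * L, γ * γ', a, b, hab, ?_⟩
  simpa only [coe_mul, Matrix.mul_assoc] using h

theorem of_transpose (h : HasSmithForm Pᵀ) : HasSmithForm P := by
  obtain ⟨L, γ, a, b, hab, h⟩ := h
  refine ⟨γ.transpose, L.transpose, a, b, hab, ?_⟩
  have := congrArg transpose h
  rw [transpose_mul, transpose_mul, transpose_transpose] at this
  simp only [coe_transpose, Matrix.mul_assoc] at this ⊢
  exact this.trans (by ext i j; fin_cases i <;> fin_cases j <;> rfl)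

end HasSmithForm

theorem hasSmithForm_of_apply_zero_zero_ne_zero {P : M₂} (ha : P 0 0 ≠ 0) : HasSmithForm P := by
  induction hn : (P 0 0).natAbs using Nat.strong_induction_on generalizing P with
  | _ n ih =>
  set a := P 0 0
  -- division with remainder lowers `|a|` as soon as `a` does not divide the entry next to it
  have row : ∀ P' : M₂, P' 0 0 = a → ¬ a ∣ P' 0 1 → HasSmithForm P' := by
    intro P' h0 hdvd
    set γ := upperT (-(P' 0 1 / a)) * ModularGroup.S
    have hcorner : (((1 : SL(2, ℤ)) : M₂) * P' * (γ : M₂)) 0 0 = P' 0 1 % a := by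
      simp [γ, mul_apply, Fin.sum_univ_two, Int.emod_def, h0]
      ring
    have hne : P' 0 1 % a ≠ 0 := fun h => hdvd (Int.dvd_of_emod_eq_zero h)
    refine .of_mul_mul 1 γ (ih _ ?_ (hcorner ▸ hne) rfl)
    rw [← hn, hcorner]
    have := Int.emod_nonneg (P' 0 1) ha
    have := Int.emod_lt (P' 0 1) ha
    omega
  by_cases hb : a ∣ P 0 1
  swap
  · exact row P rfl hb
  by_cases hc : a ∣ P 1 0
  swap
  · exact .of_transpose (row Pᵀ rfl hc)
  obtain ⟨b, hb⟩ := hb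
  obtain ⟨c, hc⟩ := hc
  have hdiag : (lowerT (-c) : M₂) * P * (upperT (-b) : M₂) = !![a, 0; 0, P 1 1 - a * b * c] := by
    rw [eta_fin_two P]
    simp [hb, hc, a]
    constructor <;> ring
  by_cases hd : a ∣ P 1 1 - a * b * c
  · exact ⟨_, _, a, _, hd, hdiag⟩
  refine .of_mul_mul (lowerT (-c)) (upperT (-b)) ?_
  rw [hdiag]
  -- adding the second row to the first puts `P 1 1 - a * b * c` next to `a`
  refine .of_mul_mul (upperT 1) 1 (row _ ?_ ?_) <;> simp [hd]

theorem hasSmithForm (P : M₂) : HasSmithForm P := by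
  by_cases hP : P = 0
  · exact ⟨1, 1, 0, 0, dvd_rfl, by rw [hP, eta_fin_two 0]; simp⟩
  obtain ⟨i, j, hij⟩ : ∃ i j, P i j ≠ 0 := by
    by_contra! h
    exact hP (ext h)
  obtain ⟨L, γ, hcorner⟩ : ∃ L γ : SL(2, ℤ), ((L : M₂) * P * (γ : M₂)) 0 0 ≠ 0 := by
    fin_cases i <;> fin_cases j
    exacts [⟨1, 1, by simpa⟩, ⟨1, ModularGroup.S, by simpa [mul_apply]⟩,
      ⟨ModularGroup.S, 1, by simpa [vecMul, dotProduct] using hij⟩,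
      ⟨ModularGroup.S, ModularGroup.S, by simpa [mul_apply, vecMul, dotProduct] using hij⟩]
  exact .of_mul_mul L γ (hasSmithForm_of_apply_zero_zero_ne_zero hcorner)

theorem exists_row_mul_SL2_eq_gcd (x y : ℤ) :
    ∃ δ : SL(2, ℤ), x * δ 0 0 + y * δ 1 0 = 0 ∧ x * δ 0 1 + y * δ 1 1 = Int.gcd x y := by
  by_cases hg : Int.gcd x y = 0
  · obtain ⟨rfl, rfl⟩ := Int.gcd_eq_zero_iff.mp hg
    exact ⟨1, by simp⟩
  obtain ⟨x', hx'⟩ := Int.gcd_dvd_left x y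
  obtain ⟨y', hy'⟩ := Int.gcd_dvd_right x y
  have hbez := Int.gcd_eq_gcd_ab x y
  have hdet : y' * x.gcdB y - x.gcdA y * -x' = 1 := by
    refine mul_left_cancel₀ (Int.natCast_ne_zero.mpr hg) ?_
    linear_combination -(x.gcdB y) * hy' - (x.gcdA y) * hx' - hbez
  refine ⟨⟨!![y', x.gcdA y; -x', x.gcdB y], by rwa [det_fin_two_of]⟩, ?_, ?_⟩
  · simp only [of_apply, cons_val', cons_val_zero, cons_val_fin_one, cons_val_one, mul_neg]
    linear_combination y' * hx' - x' * hy'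
  · simp [hbez]

/-! ### Lagrangian pairs -/

section LagrangianPair

/-- `P` and `Q` stand for the columns `0, 2` and `1, 3` of the lower half `(C D)` of a
symplectic matrix; the two conditions say that the rows of `(C D)` are isotropic and span a
primitive sublattice of `ℤ⁴`. -/
def IsLagrangianPair (P Q : M₂) : Prop :=
  P.det + Q.det = 0 ∧ ∃ X Y : M₂, P * X + Q * Y = 1

/-- `!![0, 1; k, 0]` and `!![k, 0; 0, 1]` are the blocks `P`, `Q` of `U₂([[0,k],[k,0]])`. -/
def ReducesToRep (P Q : M₂) (k : ℤ) : Prop :=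
  ∃ (γ δ : SL(2, ℤ)) (W : M₂), P * γ = W * !![0, 1; k, 0] ∧ Q * δ = W * !![k, 0; 0, 1]

variable {P Q : M₂} {k : ℤ}

theorem IsLagrangianPair.mul_mul (h : IsLagrangianPair P Q) (L γ δ : SL(2, ℤ)) :
    IsLagrangianPair ((L : M₂) * P * γ) ((L : M₂) * Q * δ) := by
  obtain ⟨hdet, X, Y, hXY⟩ := h
  refine ⟨by simpa [det_mul] using hdet, (↑γ⁻¹ : M₂) * X * (↑L⁻¹ : M₂),
    (↑δ⁻¹ : M₂) * Y * (↑L⁻¹ : M₂), ?_⟩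
  calc _ = (L : M₂) * (P * ((γ : M₂) * (↑γ⁻¹ : M₂)) * X + Q * ((δ : M₂) * (↑δ⁻¹ : M₂)) * Y) *
        (↑L⁻¹ : M₂) := by
        noncomm_ring
    _ = 1 := by
      rw [coe_mul_coe_inv, coe_mul_coe_inv, Matrix.mul_one, Matrix.mul_one, hXY,
        Matrix.mul_one, coe_mul_coe_inv]

theorem IsLagrangianPair.isUnit_of_dvd {a b : ℤ} (h : IsLagrangianPair !![a, 0; 0, b] Q)
    (hab : a ∣ b) : IsUnit a := by
  obtain ⟨hdet, X, Y, hXY⟩ := h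
  have hQY := congrArg det (eq_sub_of_add_eq' hXY)
  rw [det_mul, eta_fin_two Q, eta_fin_two X, eta_fin_two Y] at hQY
  rw [eta_fin_two Q] at hdet
  simp [det_fin_two] at hQY hdet
  obtain ⟨t, rfl⟩ := hab
  -- `det (Q Y) = det (1 - P X)` gives `1 = tr (P X) - det P (det X + det Y)`
  refine isUnit_of_dvd_one ⟨X 0 0 + t * X 1 1 - a * t * (X.det + Y.det), ?_⟩
  rw [det_fin_two, det_fin_two]
  linear_combination -hQY + (Y 0 0 * Y 1 1 - Y 0 1 * Y 1 0) * hdet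

theorem ReducesToRep.of_mul_mul (L γ δ : SL(2, ℤ))
    (h : ReducesToRep ((L : M₂) * P * γ) ((L : M₂) * Q * δ) k) : ReducesToRep P Q k := by
  obtain ⟨γ', δ', W, hP, hQ⟩ := h
  refine ⟨γ * γ', δ * δ', (↑L⁻¹ : M₂) * W, ?_, ?_⟩
  · rw [Matrix.mul_assoc _ W, ← hP]
    simp only [coe_mul, ← Matrix.mul_assoc, coe_inv_mul_coe, Matrix.one_mul]
  · rw [Matrix.mul_assoc _ W, ← hQ]
    simp only [coe_mul, ← Matrix.mul_assoc, coe_inv_mul_coe, Matrix.one_mul]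

theorem ReducesToRep.neg (h : ReducesToRep P Q k) : ReducesToRep P Q (-k) := by
  obtain ⟨γ, δ, W, hP, hQ⟩ := h
  refine ⟨γ, -δ, W * !![1, 0; 0, -1], ?_, ?_⟩
  · rw [hP, Matrix.mul_assoc]
    simp
  · rw [coe_neg, Matrix.mul_neg, hQ, Matrix.mul_assoc, ← Matrix.mul_neg]
    simp

theorem ReducesToRep.exists_natCast (h : ReducesToRep P Q k) : ∃ d : ℕ, ReducesToRep P Q d := by
  rcases Int.natAbs_eq k with hk | hk
  · exact ⟨k.natAbs, hk ▸ h⟩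
  · exact ⟨k.natAbs, (by omega : (k.natAbs : ℤ) = -k) ▸ h.neg⟩

theorem IsLagrangianPair.reducesToRep_of_diagonal {n : ℤ}
    (h : IsLagrangianPair !![1, 0; 0, n] Q) : ReducesToRep !![1, 0; 0, n] Q (-n) := by
  obtain ⟨δ, hδ₀, hδ₁⟩ := exists_row_mul_SL2_eq_gcd (Q 1 0) (Q 1 1)
  set g : ℤ := (Int.gcd (Q 1 0) (Q 1 1) : ℤ)
  set u := Q 0 0 * δ 0 0 + Q 0 1 * δ 1 0
  set v := Q 0 0 * δ 0 1 + Q 0 1 * δ 1 1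
  have hQδ : Q * (δ : M₂) = !![u, v; 0, g] := by
    rw [eta_fin_two Q, eta_fin_two (δ : M₂), mul_fin_two, hδ₀, hδ₁]
  obtain ⟨hdet, X, Y, hXY⟩ := h.mul_mul 1 1 δ
  simp only [coe_one, Matrix.one_mul, Matrix.mul_one, hQδ] at hdet hXY
  have h₁₁ := congrFun (congrFun hXY 1) 1
  simp [det_fin_two, vecMul, dotProduct, Fin.sum_univ_two] at hdet h₁₁
  -- isotropy gives `g ∣ n`, while the second rows `(0, n)` and `(0, g)` are jointly primitive
  have hg : g = 1 := by
    have hunit : g * (Y 1 1 - u * X 1 1) = 1 := by linear_combination h₁₁ - X 1 1 * hdet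
    rcases Int.isUnit_iff.mp (IsUnit.of_mul_eq_one _ hunit) with hg | hg
    · exact hg
    · have : 0 ≤ g := Int.natCast_nonneg _
      omega
  rw [hg] at hQδ hdet
  -- a row operation clears `v`, the column operation `upperT (v * n)` restores `P`,
  -- and `-S` turns `diag(1, n)` into `!![0, 1; -n, 0]`
  refine ReducesToRep.of_mul_mul (upperT (-v)) (upperT (v * n)) δ ⟨-ModularGroup.S, 1, 1, ?_, ?_⟩
  · simp
  · rw [Matrix.mul_assoc _ Q, hQδ]
    simp
    linear_combination hdet

theorem IsLagrangianPair.exists_reducesToRep (h : IsLagrangianPair P Q) :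
    ∃ d : ℕ, ReducesToRep P Q d := by
  obtain ⟨L, γ, a, b, hab, hP⟩ := hasSmithForm P
  have h₁ := h.mul_mul L γ 1
  rw [hP] at h₁
  suffices ∃ k, ReducesToRep ((L : M₂) * P * γ) ((L : M₂) * Q * ((1 : SL(2, ℤ)) : M₂)) k by
    obtain ⟨k, hk⟩ := this
    exact (hk.of_mul_mul L γ 1).exists_natCast
  rw [hP]
  rcases Int.isUnit_iff.mp (h₁.isUnit_of_dvd hab) with rfl | rfl
  · exact ⟨_, h₁.reducesToRep_of_diagonal⟩
  · have e : ((-1 : SL(2, ℤ)) : M₂) * !![-1, 0; 0, b] * ((1 : SL(2, ℤ)) : M₂) =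
        !![1, 0; 0, -b] := by simp
    have h₂ := h₁.mul_mul (-1) 1 1
    rw [e] at h₂
    exact ⟨_, .of_mul_mul (-1) 1 1 (e ▸ h₂.reducesToRep_of_diagonal)⟩

end LagrangianPair

/-! ### The symplectic group `Sp(2,ℤ)` and its lower half -/

def lowerFst (g : M₄) : M₂ := !![g 2 0, g 2 2; g 3 0, g 3 2]

def lowerSnd (g : M₄) : M₂ := !![g 2 1, g 2 3; g 3 1, g 3 3]

def lowerRight (g : M₄) : M₂ := !![g 2 2, g 2 3; g 3 2, g 3 3]

lemma stmt15J_mul_self : stmt15J * stmt15J = -1 := by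
  ext i j; fin_cases i <;> fin_cases j <;> simp [stmt15J, mul_apply, Fin.sum_univ_four]

lemma mul_mem_stmt15Sp2 {g h : M₄} (hg : g ∈ stmt15Sp2) (hh : h ∈ stmt15Sp2) :
    g * h ∈ stmt15Sp2 := by
  change (g * h)ᵀ * stmt15J * (g * h) = stmt15J
  rw [transpose_mul, show hᵀ * gᵀ * stmt15J * (g * h) = hᵀ * (gᵀ * stmt15J * g) * h by
    simp only [Matrix.mul_assoc], hg, hh]

lemma mul_stmt15J_mul_transpose {g : M₄} (hg : g ∈ stmt15Sp2) : g * stmt15J * gᵀ = stmt15J := by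
  have hg' : gᵀ * stmt15J * g = stmt15J := hg
  have hinv : -(stmt15J * gᵀ * stmt15J) * g = 1 := by
    rw [show -(stmt15J * gᵀ * stmt15J) * g = -(stmt15J * (gᵀ * stmt15J * g)) by noncomm_ring,
      hg', stmt15J_mul_self, neg_neg]
  calc g * stmt15J * gᵀ = g * stmt15J * gᵀ * -(stmt15J * stmt15J) := by
        rw [stmt15J_mul_self, neg_neg, Matrix.mul_one]
    _ = g * -(stmt15J * gᵀ * stmt15J) * stmt15J := by noncomm_ring
    _ = stmt15J := by rw [mul_eq_one_comm.mp hinv, Matrix.one_mul]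

theorem isLagrangianPair_of_mem_stmt15Sp2 {g : M₄} (hg : g ∈ stmt15Sp2) :
    IsLagrangianPair (lowerFst g) (lowerSnd g) := by
  have e : ∀ i j, (g * stmt15J * gᵀ) i j = stmt15J i j := fun i j => by
    rw [mul_stmt15J_mul_transpose hg]
  have h23 := e 2 3
  have h20 := e 2 0
  have h21 := e 2 1
  have h30 := e 3 0
  have h31 := e 3 1
  simp [mul_apply, Fin.sum_univ_four, stmt15J] at h23 h20 h21 h30 h31
  -- with these `X`, `Y`, the sum `P X + Q Y` is minus the lower left block of `g J gᵀ = J`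
  refine ⟨?_, !![-g 0 2, -g 1 2; g 0 0, g 1 0], !![-g 0 3, -g 1 3; g 0 1, g 1 1], ?_⟩
  · simp only [lowerFst, lowerSnd, det_fin_two_of]
    linear_combination h23
  · simp [lowerFst, lowerSnd, one_fin_two]
    exact ⟨⟨by linear_combination -h20, by linear_combination -h21⟩,
      by linear_combination -h30, by linear_combination -h31⟩

lemma stmt15embed_mem (γ δ : SL(2, ℤ)) : stmt15embed γ δ ∈ stmt15Sp2 := by
  have hγ := γ.det_coe
  have hδ := δ.det_coe
  rw [det_fin_two] at hγ hδ
  ext i j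
  fin_cases i <;> fin_cases j <;>
    simp [stmt15embed, stmt15J, mul_apply, Fin.sum_univ_four] <;> grind

lemma stmt15embed_mul (γ δ γ' δ' : SL(2, ℤ)) :
    stmt15embed γ δ * stmt15embed γ' δ' = stmt15embed (γ * γ') (δ * δ') := by
  ext i j
  fin_cases i <;> fin_cases j <;>
    simp [stmt15embed, mul_apply, Fin.sum_univ_four, Fin.sum_univ_two]

lemma stmt15embed_one : stmt15embed 1 1 = 1 := by
  ext i j
  fin_cases i <;> fin_cases j <;> simp [stmt15embed, one_apply]

lemma lowerFst_mul_stmt15embed (g : M₄) (γ δ : SL(2, ℤ)) :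
    lowerFst (g * stmt15embed γ δ) = lowerFst g * γ := by
  rw [eta_fin_two (γ : M₂)]
  simp [lowerFst, stmt15embed, mul_apply, Fin.sum_univ_four]

lemma lowerSnd_mul_stmt15embed (g : M₄) (γ δ : SL(2, ℤ)) :
    lowerSnd (g * stmt15embed γ δ) = lowerSnd g * δ := by
  rw [eta_fin_two (δ : M₂)]
  simp [lowerSnd, stmt15embed, mul_apply, Fin.sum_univ_four]

lemma stmt15U2_mul (a b : M₂) : stmt15U2 a * stmt15U2 b = stmt15U2 (a + b) := by
  ext i j
  fin_cases i <;> fin_cases j <;> simp [stmt15U2, mul_apply, Fin.sum_univ_four, add_comm]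

lemma stmt15U2_zero : stmt15U2 0 = 1 := by
  ext i j
  fin_cases i <;> fin_cases j <;> simp [stmt15U2, one_apply]

lemma stmt15U2_mem {a : M₂} (ha : a.IsSymm) : stmt15U2 a ∈ stmt15Sp2 := by
  have h := congrFun (congrFun ha 0) 1
  simp only [transpose_apply] at h
  ext i j
  fin_cases i <;> fin_cases j <;> simp [stmt15U2, stmt15J, mul_apply, Fin.sum_univ_four, h]

theorem mul_stmt15U2_neg_mem_stmt15Gamma20 {g : M₄} (hg : g ∈ stmt15Sp2) {W : M₂} {k : ℤ}
    (hP : lowerFst g = W * !![0, 1; k, 0]) (hQ : lowerSnd g = W * !![k, 0; 0, 1]) :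
    g * stmt15U2 (-!![0, k; k, 0]) ∈ stmt15Gamma20 := by
  refine ⟨mul_mem_stmt15Sp2 hg (stmt15U2_mem ?_), ?_⟩
  · ext i j; fin_cases i <;> fin_cases j <;> rfl
  rw [eta_fin_two W] at hP hQ
  simp [lowerFst, lowerSnd] at hP hQ
  simp [stmt15U2, mul_apply, Fin.sum_univ_four]
  grind

lemma lowerFst_mul_of_mem_stmt15Gamma20 {p : M₄} (hp : p ∈ stmt15Gamma20) (g : M₄) :
    lowerFst (p * g) = lowerRight p * lowerFst g := by
  obtain ⟨-, h20, h21, h30, h31⟩ := hp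
  simp [lowerFst, lowerRight, mul_apply, Fin.sum_univ_four, h20, h21, h30, h31]

lemma isUnit_det_lowerRight {p : M₄} (hp : p ∈ stmt15Gamma20) : IsUnit (lowerRight p).det := by
  obtain ⟨hsp, h20, h21, h30, h31⟩ := hp
  have e : ∀ i j, (pᵀ * stmt15J * p) i j = stmt15J i j := fun i j => by rw [hsp]
  have e02 := e 0 2
  have e03 := e 0 3
  have e13 := e 1 3
  simp [mul_apply, Fin.sum_univ_four, stmt15J, h20, h21, h30, h31] at e02 e03 e13
  -- entries of `Aᵀ * lowerRight p = 1`, where `A` is the upper left block of `p`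
  refine IsUnit.of_mul_eq_one (p 0 0 * p 1 1 - p 0 1 * p 1 0) ?_
  simp only [lowerRight, det_fin_two_of]
  linear_combination (p 0 1 * p 2 3 + p 1 1 * p 3 3) * e02 + e13 -
    (p 0 1 * p 2 2 + p 1 1 * p 3 2) * e03

lemma lowerFst_stmt15rep (d : ℕ) : lowerFst (stmt15rep d) = !![0, 1; (d : ℤ), 0] := by
  simp [lowerFst, stmt15rep, stmt15U2]

theorem exists_eq_mul_stmt15rep_mul {g : M₄} (hg : g ∈ stmt15Sp2) :
    ∃ d : ℕ, ∃ p ∈ stmt15Gamma20, ∃ γ δ : SL(2, ℤ), g = p * stmt15rep d * stmt15embed γ δ := by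
  obtain ⟨d, γ, δ, W, hP, hQ⟩ := (isLagrangianPair_of_mem_stmt15Sp2 hg).exists_reducesToRep
  have hp := mul_stmt15U2_neg_mem_stmt15Gamma20 (mul_mem_stmt15Sp2 hg (stmt15embed_mem γ δ))
    (by rw [lowerFst_mul_stmt15embed, hP]) (by rw [lowerSnd_mul_stmt15embed, hQ])
  refine ⟨d, _, hp, γ⁻¹, δ⁻¹, ?_⟩
  rw [stmt15rep]
  simp only [Matrix.mul_assoc]
  rw [← Matrix.mul_assoc (stmt15U2 _), stmt15U2_mul, neg_add_cancel, stmt15U2_zero, Matrix.one_mul,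
    stmt15embed_mul, mul_inv_cancel, mul_inv_cancel, stmt15embed_one, Matrix.mul_one]

theorem eq_of_stmt15rep_eq_mul {d d' : ℕ} {p : M₄} (hp : p ∈ stmt15Gamma20) {γ δ : SL(2, ℤ)}
    (h : stmt15rep d' = p * stmt15rep d * stmt15embed γ δ) : d = d' := by
  have hdet := congrArg (fun g => (lowerFst g).det) h
  simp only [lowerFst_mul_stmt15embed, lowerFst_mul_of_mem_stmt15Gamma20 hp, det_mul,
    lowerFst_stmt15rep, det_fin_two_of, det_coe] at hdet
  rcases Int.isUnit_iff.mp (isUnit_det_lowerRight hp) with hu | hu <;>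
    rw [hu] at hdet <;> omega

/-- The matrices `U₂(0₂)` and `U₂([[0,d],[d,0]])`, `d ≥ 1`, form a complete set of
representatives for `Γ_{2,0} \ Sp(2,ℤ) / l_{1,1}(SL₂(ℤ) × SL₂(ℤ))`: every element of
`Sp(2,ℤ)` lies in exactly one of these double cosets. -/
theorem stmt15 :
    (∀ g ∈ stmt15Sp2, ∃ d : ℕ, ∃ p ∈ stmt15Gamma20,
      ∃ γ δ : Matrix.SpecialLinearGroup (Fin 2) ℤ,
        g = p * stmt15rep d * stmt15embed γ δ) ∧
    (∀ d d' : ℕ, (∃ p ∈ stmt15Gamma20,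
      ∃ γ δ : Matrix.SpecialLinearGroup (Fin 2) ℤ,
        stmt15rep d' = p * stmt15rep d * stmt15embed γ δ) → d = d') := by
  exact ⟨fun g hg => exists_eq_mul_stmt15rep_mul hg,
    fun d d' ⟨p, hp, γ, δ, h⟩ => eq_of_stmt15rep_eq_mul hp h⟩
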